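/- arXiv:2302.08581 — 2 statements merged into one kernel-verified Lean document; each statement's English description precedes it below -/
import Mathlib

section
/- The collection D_λ^0 of subsets X ⊆ λ⁺ × λ⁺ such that for some club E ⊆ λ⁺ and some regressive function g : S_λ^{λ⁺} → λ⁺ the set {(α,β) : α < β < λ⁺, α,β ∈ S_λ^{λ⁺} ∩ E, g(α) = g(β)} is contained in X, is a λ-complete filter on λ⁺ × λ⁺ (it does not contain the empty set and is closed under supersets and intersections of fewer than λ members). -/
/-!
A club in the sense of `IsClub` contains a final segment of `λ⁺`, so only the regressive
functions carry information.

`∅` is not in the filter: choose for every value `v` a witness `α ∈ S` with `g α = v`. A closure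
point `δ` of this choice of cofinality `λ` contains the witness for `g δ < δ`, and this witness is
an `α < δ` with `g α = g δ`.

`λ`-completeness: as `λ^{<λ} = λ`, the tuples of length `< λ` below `λ⁺` have injective codes
below `λ⁺`, and the tuples below a fixed `x < λ⁺` have only `λ` codes. If `μ` has cofinality `λ`
and is closed under the map sending `x` to the supremum of these codes, the tuple `(gᵢ μ)ᵢ` is
bounded below `μ`, so its code is `< μ`. Every other `μ ∈ S` lies in a gap of size `≤ λ` after
the last closure point `d < μ`, and `d + (position of μ in the gap) + 1 < μ` codes it injectively.
Taking the tuple codes `ω * c` (limits) and the gap codes (successors) gives one regressive `g`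
whose collisions are collisions of every `gᵢ`.
-/

open Cardinal Set

namespace Stmt0

/-- λ⁺ as an ordinal. -/
noncomputable def lamPlus (lam : Cardinal) : Ordinal := (Order.succ lam).ord

/-- S_λ^{λ⁺} : the ordinals below λ⁺ of cofinality λ. -/
def Sstat (lam : Cardinal) : Set Ordinal :=
  {δ | δ < lamPlus lam ∧ δ.cof = lam}

/-- E is a club of λ⁺ : a closed unbounded subset of λ⁺. -/
def IsClub (lam : Cardinal) (E : Set Ordinal) : Prop :=
  (∀ a ∈ E, a < lamPlus lam) ∧
  (∀ a < lamPlus lam, ∃ b ∈ E, a ≤ b) ∧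
  (∀ a < lamPlus lam, a ≠ 0 → (∀ b < a, ∃ c ∈ E, b ≤ c ∧ c < a) → a ∈ E)

/-- g is regressive on S_λ^{λ⁺}. -/
def IsRegressive (lam : Cardinal) (g : Ordinal → Ordinal) : Prop :=
  ∀ δ ∈ Sstat lam, g δ < δ

/-- The generating set {(α,β) : α < β < λ⁺, α,β ∈ S_λ^{λ⁺} ∩ E, g(α) = g(β)}. -/
def gen (lam : Cardinal) (E : Set Ordinal) (g : Ordinal → Ordinal) :
    Set (Ordinal × Ordinal) :=
  {p | p.1 < p.2 ∧ p.2 < lamPlus lam ∧ p.1 ∈ Sstat lam ∩ E ∧ p.2 ∈ Sstat lam ∩ E ∧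
    g p.1 = g p.2}

/-- The collection D_λ^0. -/
def Dlam (lam : Cardinal) : Set (Set (Ordinal × Ordinal)) :=
  {X | X ⊆ Set.Iio (lamPlus lam) ×ˢ Set.Iio (lamPlus lam) ∧
    ∃ E g, IsClub lam E ∧ IsRegressive lam g ∧ gen lam E g ⊆ X}

universe u v

open Ordinal Order

theorem lift_iSup_lt_ord_of_isRegular {κ : Cardinal.{u}} (hκ : κ.IsRegular) {ι : Type v}
    {f : ι → Ordinal.{u}} (hι : Cardinal.lift.{u} #ι < Cardinal.lift.{v} κ)
    (hf : ∀ i, f i < κ.ord) : ⨆ i, f i < κ.ord :=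
  Ordinal.lift_iSup_lt_of_lt_cof (by rwa [← lift_cof, hκ.cof_ord]) hf

theorem add_ord_cof_le {x μ : Ordinal} (h : x < μ) : x + μ.cof.ord ≤ μ := by
  have hμ : x + (μ - x) = μ := Ordinal.add_sub_cancel_of_le h.le
  have hne : μ - x ≠ 0 := fun h0 => h.ne (by simpa [h0] using hμ)
  calc x + μ.cof.ord = x + (μ - x).cof.ord := by rw [← cof_add x hne, hμ]
    _ ≤ x + (μ - x) := add_le_add_right (ord_cof_le _) x
    _ = μ := hμ

theorem lift_mk_Iio_lt_of_lt_ord {κ : Cardinal.{u}} {y : Ordinal} (hy : y < κ.ord) :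
    Cardinal.lift.{u} #(Iio y) < Cardinal.lift.{u + 1} κ := by
  rw [Cardinal.mk_Iio_ordinal, Cardinal.lift_lift, Cardinal.lift_lt]
  exact Cardinal.lt_ord.1 hy

theorem exists_injOn_mapsTo_Iio {α : Type (u + 1)} {s : Set α} {o : Ordinal.{u}}
    (hs : #s ≤ Cardinal.lift.{u + 1} o.card) :
    ∃ e : α → Ordinal.{u}, InjOn e s ∧ MapsTo e s (Iio o) := by
  rw [← Cardinal.mk_Iio_ordinal, Cardinal.le_def] at hs
  obtain ⟨emb⟩ := hs
  classical
  refine ⟨fun a => if h : a ∈ s then emb ⟨a, h⟩ else 0, fun a ha b hb hab => ?_, fun a ha => ?_⟩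
  · simp only [dif_pos ha, dif_pos hb] at hab
    exact congrArg Subtype.val (emb.injective (Subtype.ext hab))
  · simp only [dif_pos ha]
    exact (emb ⟨a, ha⟩).2

def ClosedUnder (F : Ordinal.{u} → Ordinal.{u}) (x : Ordinal.{u}) : Prop :=
  ∀ β < x, F β < x

section ClosurePoints

variable {κ : Cardinal.{u}} {F : Ordinal.{u} → Ordinal.{u}}

theorem exists_closedUnder_gt (hκ : κ.IsRegular) (hκ₀ : κ ≠ ℵ₀)
    (hF : ∀ x < κ.ord, F x < κ.ord) {a : Ordinal} (ha : a < κ.ord) :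
    ∃ x, a < x ∧ x < κ.ord ∧ ClosedUnder F x := by
  set f : Ordinal → Ordinal := fun y => ⨆ β : Iio y, succ (F β)
  have hf : ∀ y < κ.ord, f y < κ.ord := fun y hy =>
    lift_iSup_lt_ord_of_isRegular hκ (lift_mk_Iio_lt_of_lt_ord hy) fun β =>
      (isSuccLimit_ord hκ.aleph0_le).succ_lt (hF β (β.2.trans hy))
  refine ⟨nfp f (succ a), (lt_succ a).trans_le (le_nfp f _),
    nfp_lt_ord_of_isRegular hκ hκ₀ hf ((isSuccLimit_ord hκ.aleph0_le).succ_lt ha),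
    fun β hβ => ?_⟩
  obtain ⟨n, hn⟩ := lt_nfp_iff.1 hβ
  calc F β < succ (F β) := lt_succ _
    _ ≤ f (f^[n] (succ a)) := Ordinal.le_iSup (fun γ : Iio _ => succ (F γ)) ⟨β, hn⟩
    _ ≤ nfp f (succ a) := by
      rw [← Function.iterate_succ_apply' f]; exact iterate_le_nfp f _ _

theorem exists_closedUnder_cof (hκ : κ.IsRegular) (hκ₀ : κ ≠ ℵ₀)
    (hF : ∀ x < κ.ord, F x < κ.ord) {o : Ordinal} (ho : IsSuccLimit o) (hoκ : o < κ.ord)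
    {b : Ordinal} (hb : b < κ.ord) :
    ∃ δ < κ.ord, δ.cof = o.cof ∧ b < δ ∧ ClosedUnder F δ := by
  -- Enumerate the closure points above `b`; every ordinal `≥ κ.ord` is thrown in so that the
  -- set is cofinal in `Ordinal`. The enumeration is normal, so it preserves cofinality.
  set C : Set Ordinal := {x | b < x ∧ ∀ β < x, β < κ.ord → F β < x}
  have hCcof : IsCofinal C := fun a =>
    ⟨max a κ.ord, ⟨hb.trans_le (le_max_right _ _),
      fun β _ hβ => (hF β hβ).trans_le (le_max_right _ _)⟩, le_max_left _ _⟩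
  have hCclosed : DirSupClosed C := by
    refine dirSupClosed_iff_of_linearOrder.2 fun d hdC ⟨x, hx⟩ a ha => ⟨?_, fun β hβ hβκ => ?_⟩
    · exact (hdC hx).1.trans_le (ha.1 hx)
    · obtain ⟨y, hy, hβy⟩ := (lt_isLUB_iff ha).1 hβ
      exact ((hdC hy).2 β hβy hβκ).trans_le (ha.1 hy)
  set H : Ordinal → Ordinal := Subtype.val ∘ Order.enum C hCcof
  have hH : IsNormal H := isNormal_enum_iff_dirSupClosed.2 hCclosed
  have hHκ : ∀ ξ < κ.ord, H ξ < κ.ord := by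
    intro ξ
    induction ξ using WellFoundedLT.induction with | ind ξ ih
    intro hξ
    have hsup : (⨆ η : Iio ξ, H η) ⊔ b < κ.ord := max_lt
      (lift_iSup_lt_ord_of_isRegular hκ (lift_mk_Iio_lt_of_lt_ord hξ) fun η =>
        ih η η.2 (η.2.trans hξ)) hb
    obtain ⟨x, hx, hxκ, hxF⟩ := exists_closedUnder_gt hκ hκ₀ hF hsup
    refine (enum_le_of_forall_lt (s := C) (a := ξ) (o := x) ⟨(le_max_right _ _).trans_lt hx,
      fun β hβ _ => hxF β hβ⟩ fun η hη => ?_).trans_lt hxκ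
    exact ((Ordinal.le_iSup (fun η : Iio ξ => H η) ⟨η, hη⟩).trans (le_max_left _ _)).trans_lt hx
  have hHo : H o ∈ C := (Order.enum C hCcof o).2
  exact ⟨H o, hHκ o hoκ, cof_map_of_isNormal hH ho, hHo.1,
    fun β hβ => hHo.2 β hβ (hβ.trans (hHκ o hoκ))⟩

end ClosurePoints

section Gaps

variable {F : Ordinal.{u} → Ordinal.{u}}

noncomputable def lastClosed (F : Ordinal.{u} → Ordinal.{u}) (μ : Ordinal.{u}) : Ordinal.{u} :=
  sSup {x | ClosedUnder F x ∧ x < μ}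

theorem bddAbove_closedUnder_lt (μ : Ordinal) : BddAbove {x | ClosedUnder F x ∧ x < μ} :=
  ⟨μ, fun _ hx => hx.2.le⟩

theorem le_lastClosed {x μ : Ordinal} (hx : ClosedUnder F x) (hxμ : x < μ) :
    x ≤ lastClosed F μ :=
  le_csSup (bddAbove_closedUnder_lt μ) ⟨hx, hxμ⟩

theorem closedUnder_lastClosed (μ : Ordinal) : ClosedUnder F (lastClosed F μ) := fun β hβ => by
  obtain ⟨x, hx, hβx⟩ := (lt_csSup_iff' (bddAbove_closedUnder_lt μ)).1 hβ
  exact (hx.1 β hβx).trans_le (le_lastClosed hx.1 hx.2)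

theorem lastClosed_lt {μ : Ordinal} (hμ : ¬ ClosedUnder F μ) : lastClosed F μ < μ :=
  (csSup_le' fun _ hx => hx.2.le).lt_of_ne fun h => hμ (h ▸ closedUnder_lastClosed μ)

end Gaps

section LamPlus

variable {lam : Cardinal.{0}}

theorem lamPlus_isRegular (hreg : lam.IsRegular) : (succ lam).IsRegular :=
  isRegular_succ hreg.aleph0_le

theorem succ_ne_aleph0 (hreg : lam.IsRegular) : succ lam ≠ ℵ₀ :=
  (hreg.aleph0_le.trans_lt (lt_succ lam)).ne'

theorem lt_lamPlus_iff {o : Ordinal} : o < lamPlus lam ↔ o.card ≤ lam := by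
  rw [lamPlus, Cardinal.lt_ord, lt_succ_iff]

theorem card_lamPlus : (lamPlus lam).card = succ lam :=
  card_ord _

theorem ord_lt_lamPlus : lam.ord < lamPlus lam := by
  rw [lt_lamPlus_iff, card_ord]

theorem succ_lt_lamPlus (hreg : lam.IsRegular) {x : Ordinal} (hx : x < lamPlus lam) :
    succ x < lamPlus lam :=
  (isSuccLimit_ord (hreg.aleph0_le.trans (le_succ lam))).succ_lt hx

theorem lamPlus_pos : 0 < lamPlus lam :=
  ord_lt_lamPlus.trans_le' zero_le

-- The closure clause of `IsClub` also applies at successor ordinals.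
theorem IsClub.Ioo_subset {E : Set Ordinal} (hE : IsClub lam E) {b : Ordinal} (hb : b ∈ E) :
    Ioo b (lamPlus lam) ⊆ E := by
  intro a ⟨hba, haP⟩
  induction a using WellFoundedLT.induction with | ind a ih
  refine hE.2.2 a haP (pos_iff_ne_zero.1 (zero_le.trans_lt hba)) fun x hx => ?_
  rcases le_or_gt x b with hxb | hbx
  · exact ⟨b, hb, hxb, hba⟩
  · exact ⟨x, ih x hx hbx (hx.trans haP), le_rfl, hx⟩

theorem isClub_Ioo (hreg : lam.IsRegular) {γ : Ordinal} (hγ : γ < lamPlus lam) :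
    IsClub lam (Ioo γ (lamPlus lam)) := by
  refine ⟨fun a ha => ha.2, fun a ha => ⟨max a (succ γ), ⟨?_, max_lt ha ?_⟩, le_max_left _ _⟩,
    fun a haP ha0 hclosed => ?_⟩
  · exact (lt_succ γ).trans_le (le_max_right _ _)
  · exact succ_lt_lamPlus hreg hγ
  · obtain ⟨c, hc, -, hca⟩ := hclosed 0 (pos_iff_ne_zero.2 ha0)
    exact ⟨hc.1.trans hca, haP⟩

theorem exists_pair_of_isRegressive (hreg : lam.IsRegular) {g : Ordinal → Ordinal}
    (hg : IsRegressive lam g) {b : Ordinal} (hb : b < lamPlus lam) :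
    ∃ α β, b < α ∧ α < β ∧ α ∈ Sstat lam ∧ β ∈ Sstat lam ∧ g α = g β := by
  classical
  set pick : Ordinal → Ordinal := fun v =>
    if h : ∃ α, α ∈ Sstat lam ∧ b < α ∧ g α = v then h.choose else 0
  have hpick : ∀ v < lamPlus lam, pick v < lamPlus lam := fun v _ => by
    by_cases h : ∃ α, α ∈ Sstat lam ∧ b < α ∧ g α = v
    · simpa [pick, dif_pos h] using h.choose_spec.1.1
    · simpa [pick, dif_neg h] using lamPlus_pos
  obtain ⟨δ, hδP, hδcof, hbδ, hδpick⟩ := exists_closedUnder_cof (lamPlus_isRegular hreg)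
    (succ_ne_aleph0 hreg) hpick (isSuccLimit_ord hreg.aleph0_le) ord_lt_lamPlus hb
  have hδ : δ ∈ Sstat lam := ⟨hδP, hδcof.trans hreg.cof_ord⟩
  have hex : ∃ α, α ∈ Sstat lam ∧ b < α ∧ g α = g δ := ⟨δ, hδ, hbδ, rfl⟩
  have hαδ : pick (g δ) < δ := hδpick _ (hg δ hδ)
  simp only [pick, dif_pos hex] at hαδ
  obtain ⟨hα, hbα, hgα⟩ := hex.choose_spec
  exact ⟨_, δ, hbα, hαδ, hα, hδ, hgα⟩

theorem empty_not_mem_Dlam (hreg : lam.IsRegular) : ∅ ∉ Dlam lam := by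
  rintro ⟨-, E, g, hE, hg, hgen⟩
  obtain ⟨b, hb, -⟩ := hE.2.1 0 lamPlus_pos
  obtain ⟨α, β, hbα, hαβ, hα, hβ, hgαβ⟩ := exists_pair_of_isRegressive hreg hg (hE.1 b hb)
  have hαE : α ∈ E := hE.Ioo_subset hb ⟨hbα, hα.1⟩
  have hβE : β ∈ E := hE.Ioo_subset hb ⟨hbα.trans hαβ, hβ.1⟩
  exact hgen (show (α, β) ∈ gen lam E g from ⟨hαβ, hβ.1, ⟨hα, hαE⟩, ⟨hβ, hβE⟩, hgαβ⟩)

theorem Dlam_mem_of_superset {X Y : Set (Ordinal × Ordinal)} (hX : X ∈ Dlam lam) (hXY : X ⊆ Y)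
    (hY : Y ⊆ Iio (lamPlus lam) ×ˢ Iio (lamPlus lam)) : Y ∈ Dlam lam :=
  let ⟨_, E, g, hE, hg, hgen⟩ := hX
  ⟨hY, E, g, hE, hg, hgen.trans hXY⟩

end LamPlus

section Coding

variable {lam : Cardinal.{0}} {ι : Type}

theorem omega0_mul_lt_lamPlus (hreg : lam.IsRegular) {x : Ordinal} (hx : x < lamPlus lam) :
    ω * x < lamPlus lam := by
  rw [lt_lamPlus_iff] at hx ⊢
  rw [card_mul, card_omega0]
  exact mul_le_of_le hreg.aleph0_le hreg.aleph0_le hx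

theorem mk_pi_Iic_le (hreg : lam.IsRegular) (hpow : lam ^< lam = lam) (hι : #ι < lam)
    {x : Ordinal} (hx : x < lamPlus lam) : #(ι → Iic x) ≤ Cardinal.lift.{1} lam := by
  have hIic : #(Iic x) ≤ Cardinal.lift.{1} lam := by
    rw [← Iio_succ, Cardinal.mk_Iio_ordinal, Cardinal.lift_le]
    exact lt_lamPlus_iff.1 (succ_lt_lamPlus hreg hx)
  calc #(ι → Iic x) = #(Iic x) ^ Cardinal.lift.{1} #ι := by
        rw [Cardinal.mk_arrow, Cardinal.lift_uzero]
    _ ≤ Cardinal.lift.{1} lam ^ Cardinal.lift.{1} #ι := power_le_power_right hIic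
    _ = Cardinal.lift.{1} (lam ^ #ι) := by rw [Cardinal.lift_power]
    _ ≤ Cardinal.lift.{1} lam := Cardinal.lift_le.2 ((le_powerlt lam hι).trans_eq hpow)

theorem exists_tupleCode (hreg : lam.IsRegular) (hpow : lam ^< lam = lam) (hι : #ι < lam) :
    ∃ c : (ι → Ordinal) → Ordinal, InjOn c {t | ∀ i, t i < lamPlus lam} ∧
      MapsTo c {t | ∀ i, t i < lamPlus lam} (Iio (lamPlus lam)) := by
  apply exists_injOn_mapsTo_Iio
  -- A tuple below `λ⁺` is bounded below `λ⁺`, and there are only `λ` tuples below each bound.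
  set piece : Iio (lamPlus lam) → Set (ι → Ordinal) := fun x => pi univ fun _ => Iic x.1
  have hcover : {t : ι → Ordinal | ∀ i, t i < lamPlus lam} ⊆ ⋃ x, piece x := fun t ht =>
    mem_iUnion.2 ⟨⟨⨆ i, t i, lift_iSup_lt_ord_of_isRegular (lamPlus_isRegular hreg)
      (by simpa using hι.trans (lt_succ lam)) ht⟩,
      fun i _ => Ordinal.le_iSup t i⟩
  have hpiece : ∀ x, #(piece x) ≤ Cardinal.lift.{1} lam := fun x => by
    rw [Cardinal.mk_congr (Equiv.Set.univPi _)]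
    exact mk_pi_Iic_le hreg hpow hι x.2
  calc #{t : ι → Ordinal | ∀ i, t i < lamPlus lam}
      ≤ #(⋃ x, piece x) := Cardinal.mk_le_mk_of_subset hcover
    _ ≤ #(Iio (lamPlus lam)) * ⨆ x, #(piece x) := Cardinal.mk_iUnion_le piece
    _ ≤ Cardinal.lift.{1} (succ lam) * Cardinal.lift.{1} lam := by
      rw [Cardinal.mk_Iio_ordinal, card_lamPlus]
      exact mul_le_mul_right (ciSup_le' hpiece) _
    _ = Cardinal.lift.{1} (lamPlus lam).card := by
      rw [← Cardinal.lift_mul, card_lamPlus,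
        mul_eq_left (hreg.aleph0_le.trans (le_succ lam)) (le_succ lam) hreg.pos.ne']

noncomputable def tupleSup (h : (ι → Ordinal.{0}) → Ordinal.{0}) (x : Ordinal.{0}) :
    Ordinal.{0} :=
  ⨆ t : ι → Iic x, h fun i => t i

theorem le_tupleSup (h : (ι → Ordinal) → Ordinal) {t : ι → Ordinal} {x : Ordinal}
    (ht : ∀ i, t i ≤ x) : h t ≤ tupleSup h x :=
  Ordinal.le_iSup (fun s : ι → Iic x => h fun i => s i) fun i => ⟨t i, ht i⟩

theorem tupleSup_lt_lamPlus (hreg : lam.IsRegular) (hpow : lam ^< lam = lam) (hι : #ι < lam)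
    {h : (ι → Ordinal) → Ordinal} (hh : ∀ t, (∀ i, t i < lamPlus lam) → h t < lamPlus lam)
    {x : Ordinal} (hx : x < lamPlus lam) : tupleSup h x < lamPlus lam :=
  lift_iSup_lt_ord_of_isRegular (lamPlus_isRegular hreg)
    (by simpa using (mk_pi_Iic_le hreg hpow hι hx).trans_lt (Cardinal.lift_lt.2 (lt_succ lam)))
    fun s => hh _ fun i => (s i).2.trans_lt hx

theorem lt_of_closedUnder_tupleSup {h : (ι → Ordinal) → Ordinal} {μ : Ordinal}
    (hμ : ClosedUnder (tupleSup h) μ) (hι : #ι < μ.cof) {t : ι → Ordinal} (ht : ∀ i, t i < μ) :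
    h t < μ :=
  (le_tupleSup h fun i => Ordinal.le_iSup t i).trans_lt (hμ _ (iSup_lt_of_lt_cof hι ht))

end Coding

section GapCode

variable {lam : Cardinal.{0}}

theorem isSuccLimit_of_mem_Sstat (hreg : lam.IsRegular) {μ : Ordinal} (hμ : μ ∈ Sstat lam) :
    IsSuccLimit μ :=
  one_lt_cof_iff.1 (hμ.2 ▸ one_lt_aleph0.trans_le hreg.aleph0_le)

theorem exists_gapCode (hreg : lam.IsRegular) {F : Ordinal → Ordinal}
    (hF : ∀ x < lamPlus lam, F x < lamPlus lam) :
    ∃ h : Ordinal → Ordinal, InjOn h {μ | μ ∈ Sstat lam ∧ ¬ ClosedUnder F μ} ∧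
      ∀ μ ∈ Sstat lam, ¬ ClosedUnder F μ → h μ < μ ∧ ¬ IsSuccPrelimit (h μ) := by
  set T := {μ | μ ∈ Sstat lam ∧ ¬ ClosedUnder F μ}
  -- The points of `T` with the same last closure point `d` lie below the next closure point,
  -- so there are at most `λ` of them.
  have hgap : ∀ d, ∃ e : Ordinal → Ordinal, InjOn e {μ ∈ T | lastClosed F μ = d} ∧
      MapsTo e {μ ∈ T | lastClosed F μ = d} (Iio lam.ord) := by
    intro d
    apply exists_injOn_mapsTo_Iio
    rw [card_ord]
    rcases {μ ∈ T | lastClosed F μ = d}.eq_empty_or_nonempty with hempty | ⟨μ₀, hμ₀, hd⟩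
    · simp [hempty]
    obtain ⟨y, hdy, hyP, hy⟩ := exists_closedUnder_gt (lamPlus_isRegular hreg)
      (succ_ne_aleph0 hreg) hF (hd ▸ (lastClosed_lt hμ₀.2).trans hμ₀.1.1)
    have hsub : {μ ∈ T | lastClosed F μ = d} ⊆ Iio y := fun μ ⟨hμ, hμd⟩ =>
      lt_of_not_ge fun hyμ => (hdy.trans_le
        (hμd ▸ le_lastClosed hy (hyμ.lt_of_ne fun h => hμ.2 (h ▸ hy)))).false
    calc #{μ ∈ T | lastClosed F μ = d} ≤ #(Iio y) := Cardinal.mk_le_mk_of_subset hsub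
      _ = Cardinal.lift y.card := Cardinal.mk_Iio_ordinal y
      _ ≤ Cardinal.lift lam := Cardinal.lift_le.2 (lt_lamPlus_iff.1 hyP)
  choose e he_inj he_lt using hgap
  set code : Ordinal → Ordinal := fun μ => lastClosed F μ + e (lastClosed F μ) μ
  have hcode_lt : ∀ μ ∈ T, code μ < μ := fun μ hμ =>
    calc code μ < lastClosed F μ + lam.ord := add_lt_add_right (he_lt _ ⟨hμ, rfl⟩) _
      _ ≤ μ := by simpa [hμ.1.2] using add_ord_cof_le (lastClosed_lt hμ.2)
  have hcode_sep : ∀ α ∈ T, ∀ β ∈ T, lastClosed F α < lastClosed F β → code α < code β := by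
    intro α hα β hβ hαβ
    have hαβ' : α ≤ lastClosed F β := le_of_not_gt fun h =>
      (le_lastClosed (closedUnder_lastClosed β) h).not_gt hαβ
    exact (hcode_lt α hα).trans_le (hαβ'.trans le_self_add)
  refine ⟨fun μ => succ (code μ), fun α hα β hβ hαβ => ?_, fun μ hμ hμF =>
    ⟨(isSuccLimit_of_mem_Sstat hreg hμ).succ_lt (hcode_lt μ ⟨hμ, hμF⟩), not_isSuccPrelimit_succ _⟩⟩
  replace hαβ : code α = code β := succ_injective hαβ
  rcases lt_trichotomy (lastClosed F α) (lastClosed F β) with h | h | h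
  · exact absurd hαβ (hcode_sep α hα β hβ h).ne
  · simp only [code, ← h] at hαβ
    exact he_inj _ ⟨hα, rfl⟩ ⟨hβ, h.symm⟩ (add_left_cancel hαβ)
  · exact absurd hαβ (hcode_sep β hβ α hα h).ne'

end GapCode

section Intersection

variable {lam : Cardinal.{0}}

theorem exists_isRegressive_diagonal (hreg : lam.IsRegular) (hpow : lam ^< lam = lam)
    {ι : Type} (hι : #ι < lam) {G : ι → Ordinal → Ordinal} (hG : ∀ i, IsRegressive lam (G i)) :
    ∃ g, IsRegressive lam g ∧ ∀ α ∈ Sstat lam, ∀ β ∈ Sstat lam, α < β → g α = g β →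
      ∀ i, G i α = G i β := by
  classical
  obtain ⟨c, hc_inj, hc_lt⟩ := exists_tupleCode hreg hpow hι
  set F := tupleSup fun t => ω * c t
  have hF : ∀ x < lamPlus lam, F x < lamPlus lam := fun x hx =>
    tupleSup_lt_lamPlus hreg hpow hι (fun t ht => omega0_mul_lt_lamPlus hreg (hc_lt ht)) hx
  obtain ⟨h, hh_inj, hh_lt⟩ := exists_gapCode hreg hF
  have htuple : ∀ μ ∈ Sstat lam, ∀ i, G i μ < lamPlus lam := fun μ hμ i =>
    (hG i μ hμ).trans hμ.1
  set g : Ordinal → Ordinal := fun μ => if ClosedUnder F μ then ω * c (G · μ) else h μ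
  refine ⟨g, fun μ hμ => ?_, fun α hα β hβ hαβ hg => ?_⟩
  · by_cases hμF : ClosedUnder F μ
    · simpa [g, hμF] using lt_of_closedUnder_tupleSup hμF (hμ.2 ▸ hι) (hG · μ hμ)
    · simpa [g, hμF] using (hh_lt μ hμ hμF).1
  have hprelimit : ∀ x, IsSuccPrelimit (ω * x) := fun x =>
    isSuccPrelimit_iff_omega0_dvd.2 (dvd_mul_right _ _)
  by_cases hαF : ClosedUnder F α <;> by_cases hβF : ClosedUnder F β <;>
    simp only [g, hαF, hβF, if_true, if_false] at hg
  · exact congrFun (hc_inj (htuple α hα) (htuple β hβ) (mul_left_cancel₀ omega0_ne_zero hg))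
  · exact absurd (hg ▸ hprelimit _) (hh_lt β hβ hβF).2
  · exact absurd (hg ▸ hprelimit _) (hh_lt α hα hαF).2
  · exact absurd (hh_inj ⟨hα, hαF⟩ ⟨hβ, hβF⟩ hg) hαβ.ne

theorem iInter_mem_Dlam (hreg : lam.IsRegular) (hpow : lam ^< lam = lam) {ι : Type}
    (hι : #ι < lam) {f : ι → Set (Ordinal × Ordinal)} (hf : ∀ i, f i ∈ Dlam lam) :
    (Iio (lamPlus lam) ×ˢ Iio (lamPlus lam)) ∩ ⋂ i, f i ∈ Dlam lam := by
  choose E G hE hG hgen using fun i => (hf i).2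
  choose b hb using fun i => (hE i).2.1 0 lamPlus_pos
  have hγ : ⨆ i, b i < lamPlus lam := lift_iSup_lt_ord_of_isRegular (lamPlus_isRegular hreg)
    (by simpa using hι.trans (lt_succ lam)) fun i => (hE i).1 _ (hb i).1
  obtain ⟨g, hg, hgG⟩ := exists_isRegressive_diagonal hreg hpow hι hG
  refine ⟨inter_subset_left, _, g, isClub_Ioo hreg hγ, hg, ?_⟩
  rintro ⟨α, β⟩ ⟨hαβ, hβP, ⟨hα, hαγ, -⟩, ⟨hβ, hβγ, -⟩, hgαβ⟩
  have hmem : ∀ i, ∀ μ ∈ Ioo (⨆ i, b i) (lamPlus lam), μ ∈ E i := fun i μ hμ =>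
    (hE i).Ioo_subset (hb i).1 ⟨(Ordinal.le_iSup b i).trans_lt hμ.1, hμ.2⟩
  refine ⟨⟨hα.1, hβP⟩, mem_iInter.2 fun i => hgen i ?_⟩
  exact ⟨hαβ, hβP, ⟨hα, hmem i α ⟨hαγ, hα.1⟩⟩, ⟨hβ, hmem i β ⟨hβγ, hβP⟩⟩, hgG α hα β hβ hαβ hgαβ i⟩

end Intersection

/-- D_λ^0 is a λ-complete filter on λ⁺ × λ⁺: it does not contain ∅, is closed under
supersets (within the square), and closed under intersections of fewer than λ members. -/
theorem stmt0 (lam : Cardinal) (hreg : lam.IsRegular) (hpow : lam ^< lam = lam) :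
    ∅ ∉ Dlam lam ∧
    (∀ X Y : Set (Ordinal × Ordinal), X ∈ Dlam lam → X ⊆ Y →
      Y ⊆ Set.Iio (lamPlus lam) ×ˢ Set.Iio (lamPlus lam) → Y ∈ Dlam lam) ∧
    (∀ (ι : Type) (_ : #ι < lam) (f : ι → Set (Ordinal × Ordinal)),
      (∀ i, f i ∈ Dlam lam) →
      ((Set.Iio (lamPlus lam) ×ˢ Set.Iio (lamPlus lam)) ∩ ⋂ i, f i) ∈ Dlam lam) :=
  ⟨empty_not_mem_Dlam hreg, fun _ _ hX hXY hY => Dlam_mem_of_superset hX hXY hY,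
    fun _ hι _ hf => iInter_mem_Dlam hreg hpow hι hf⟩

end Stmt0
end

section
/- Suppose λ is regular with λ = λ^{<λ}, and for each α < λ⁺ we are given u_α ∈ [Ord]^{<λ} and f_α : u_α → λ, together with g : ∪_{α<λ⁺} u_α → D_λ^0. Then the set of pairs (α,β) with α < β < λ⁺ such that (f_α, f_β) is a Δ-system pair and for every ξ ∈ u_α ∩ u_β we have (α,β) ∈ g(ξ), belongs to D_λ^0. -/
/-!
For δ ∈ S_λ^{λ⁺} the *trace* of δ lists, for each ξ ∈ u_δ that already lies in some u_α with
α < δ, the first such α and the position of ξ in u_α (together they identify ξ), the position of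
ξ in u_δ, f_δ(ξ), the value at δ of a regressive function witnessing g(ξ) ∈ D_λ^0, and a marker
that separates δ from all other ordinals whenever δ lies below the final segment attached to
g(ξ). As |u_δ| < λ = cf δ, all ordinals in the trace lie below some γ < δ, and λ^{<λ} = λ leaves
at most λ traces below any γ < λ⁺, so the trace can be read off a regressive function G.
If α < β have the same G-value, each ξ ∈ u_α ∩ u_β is listed in the trace of β (its first index
is ≤ α), hence in that of α, and comparing the two entries of ξ gives the Δ-system conditions,
the common regressive value and, through the marker, that α and β lie in the final segment of
g(ξ).
-/

open Cardinal Set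

namespace Stmt2

noncomputable def lamPlus (lam : Cardinal) : Ordinal := (Order.succ lam).ord

def Sstat (lam : Cardinal) : Set Ordinal :=
  {δ | δ < lamPlus lam ∧ δ.cof = lam}

def IsClub (lam : Cardinal) (E : Set Ordinal) : Prop :=
  (∀ a ∈ E, a < lamPlus lam) ∧
  (∀ a < lamPlus lam, ∃ b ∈ E, a ≤ b) ∧
  (∀ a < lamPlus lam, a ≠ 0 → (∀ b < a, ∃ c ∈ E, b ≤ c ∧ c < a) → a ∈ E)

def IsRegressive (lam : Cardinal) (g : Ordinal → Ordinal) : Prop :=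
  ∀ δ ∈ Sstat lam, g δ < δ

def gen (lam : Cardinal) (E : Set Ordinal) (g : Ordinal → Ordinal) :
    Set (Ordinal × Ordinal) :=
  {p | p.1 < p.2 ∧ p.2 < lamPlus lam ∧ p.1 ∈ Sstat lam ∩ E ∧ p.2 ∈ Sstat lam ∩ E ∧
    g p.1 = g p.2}

def Dlam (lam : Cardinal) : Set (Set (Ordinal × Ordinal)) :=
  {X | X ⊆ Set.Iio (lamPlus lam) ×ˢ Set.Iio (lamPlus lam) ∧
    ∃ E g, IsClub lam E ∧ IsRegressive lam g ∧ gen lam E g ⊆ X}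

noncomputable def otp (u : Set Ordinal) : Ordinal :=
  Ordinal.type ((· < ·) : u → u → Prop)

def DeltaSystemPair (u₁ u₂ : Set Ordinal) (f₁ f₂ : Ordinal → Ordinal) : Prop :=
  otp u₁ = otp u₂ ∧
  ∀ a ∈ u₁ ∩ u₂, otp (u₁ ∩ Set.Iio a) = otp (u₂ ∩ Set.Iio a) ∧ f₁ a = f₂ a

universe v

section
variable {lam : Cardinal.{0}}

theorem lamPlus_pos : 0 < lamPlus lam :=
  ord_pos.2 (Order.bot_lt_succ lam)

theorem card_le_of_lt_lamPlus {x : Ordinal} (h : x < lamPlus lam) : x.card ≤ lam :=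
  Order.lt_succ_iff.1 (lt_ord.1 h)

theorem mk_Iio_le_of_lt_lamPlus {x : Ordinal} (h : x < lamPlus lam) : #(Iio x) ≤ lift lam := by
  rw [mk_Iio_ordinal]
  exact lift_le.2 (card_le_of_lt_lamPlus h)

theorem mk_Iic_le_of_lt_lamPlus (hlam : ℵ₀ ≤ lam) {x : Ordinal} (h : x < lamPlus lam) :
    #(Iic x) ≤ lift lam := by
  rw [← Order.Iio_succ]
  exact mk_Iio_le_of_lt_lamPlus ((isSuccLimit_ord (hlam.trans (Order.le_succ lam))).succ_lt h)

theorem mk_Iio_ord : #(Iio lam.ord) = lift lam := by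
  rw [mk_Iio_ordinal, card_ord]

theorem mul_div_add_le_of_mem_Sstat {δ γ : Ordinal} (hδ : δ ∈ Sstat lam) (hγ : γ < δ) :
    lam.ord * (γ / lam.ord) + lam.ord ≤ δ := by
  by_contra! h
  have hq : lam.ord * (γ / lam.ord) < δ := (Ordinal.mul_div_le γ lam.ord).trans_lt hγ
  obtain ⟨s, rfl⟩ : ∃ s, δ = lam.ord * (γ / lam.ord) + s :=
    ⟨_, (Ordinal.add_sub_cancel_of_le hq.le).symm⟩
  have hs0 : s ≠ 0 := by rintro rfl; simp at hq
  have hs : s.card < lam := lt_ord.1 ((add_lt_add_iff_left _).1 h)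
  have hcof := hδ.2
  rw [Ordinal.cof_add _ hs0] at hcof
  exact hs.not_ge (hcof ▸ Ordinal.cof_le_card s)

theorem mul_add_inj_of_lt {b a a' s s' : Ordinal} (hs : s < b) (hs' : s' < b)
    (h : b * a + s = b * a' + s') : a = a' ∧ s = s' := by
  have hb : b ≠ 0 := (pos_of_gt hs).ne'
  obtain rfl : a = a' := by
    simpa [Ordinal.mul_add_div _ hb, Ordinal.div_eq_zero_of_lt hs,
      Ordinal.div_eq_zero_of_lt hs'] using congrArg (· / b) h
  exact ⟨rfl, add_left_cancel h⟩

theorem exists_lt_ord_injOn (hlam : lam ≠ 0) {T : Type v} {s : Set T} (hs : #s ≤ lift lam) :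
    ∃ e : T → Ordinal, (∀ t, e t < lam.ord) ∧ InjOn e s := by
  classical
  obtain ⟨emb⟩ : Nonempty (s ↪ Iio lam.ord) := by
    refine lift_mk_le'.1 ?_
    simpa [mk_Iio_ordinal] using lift_le.{1}.2 hs
  refine ⟨fun t => if h : t ∈ s then emb ⟨t, h⟩ else 0, fun t => ?_, fun t ht t' ht' h => ?_⟩
  · dsimp only
    split_ifs
    exacts [(emb _).2, ord_pos.2 (pos_iff_ne_zero.2 hlam)]
  · simp only [dif_pos ht, dif_pos ht'] at h
    exact congrArg Subtype.val (emb.injective (Subtype.ext h))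

theorem mk_set_prod_le (hlam : ℵ₀ ≤ lam) {α β : Type*} {s : Set α} {t : Set β}
    (hs : #s ≤ lift lam) (ht : #t ≤ lift lam) : #(s ×ˢ t) ≤ lift lam := by
  rw [mk_congr (Equiv.Set.prod s t), mk_prod]
  calc lift #s * lift #t ≤ lift (lift lam) * lift (lift lam) :=
        mul_le_mul' (lift_le.2 hs) (lift_le.2 ht)
    _ = lift lam := by simp [mul_eq_self (aleph0_le_lift.2 hlam)]

theorem mk_iUnion_Iio_ord_le (hlam : ℵ₀ ≤ lam) {α : Type v} (A : Iio lam.ord → Set α)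
    (hA : ∀ o, #(A o) ≤ lift lam) : #(⋃ o, A o) ≤ lift lam := by
  refine lift_le.{1}.1 ((mk_iUnion_le_lift A).trans ?_)
  calc _ ≤ lift.{v} (lift.{1} lam) * lift.{1} (lift.{v} lam) :=
        mul_le_mul' (lift_le.2 mk_Iio_ord.le) (ciSup_le' fun o => lift_le.2 (hA o))
    _ = lift.{1} (lift.{v} lam) := by simp [mul_eq_self (aleph0_le_lift.2 hlam)]

theorem mk_bounded_subset_lt_le (hlam : ℵ₀ ≤ lam) (hpow : lam ^< lam = lam) {α : Type v}
    {X : Set α} (hX : #X ≤ lift lam) : #{S : Set α | S ⊆ X ∧ #S < lift lam} ≤ lift lam := by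
  have hcover : {S : Set α | S ⊆ X ∧ #S < lift lam} ⊆
      ⋃ o : Iio lam.ord, {S | S ⊆ X ∧ #S ≤ lift o.1.card} := by
    rintro S ⟨hSX, hS⟩
    obtain ⟨κ, hκ⟩ := mem_range_lift_of_le hS.le
    refine mem_iUnion.2 ⟨⟨κ.ord, ord_lt_ord.2 ?_⟩, hSX, by simp [← hκ]⟩
    rwa [← hκ, lift_lt] at hS
  refine (mk_le_mk_of_subset hcover).trans (mk_iUnion_Iio_ord_le hlam _ fun o => ?_)
  calc #{S | S ⊆ X ∧ #S ≤ lift o.1.card} ≤ max #X ℵ₀ ^ lift o.1.card :=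
        mk_bounded_subset_le X _
    _ ≤ lift lam ^ lift o.1.card := power_le_power_right (max_le hX (aleph0_le_lift.2 hlam))
    _ ≤ lift lam := by
        rw [← lift_power, lift_le]
        exact (le_powerlt lam (lt_ord.1 o.2)).trans hpow.le

theorem exists_lt_ord_separating_Iic (hlam : ℵ₀ ≤ lam) {η : Ordinal} (hη : η < lamPlus lam) :
    ∃ t : Ordinal → Ordinal, (∀ δ, t δ < lam.ord) ∧ ∀ α ≤ η, ∀ β, t α = t β → α = β := by
  classical
  obtain ⟨e, he, hinj⟩ := exists_lt_ord_injOn (aleph0_pos.trans_le hlam).ne'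
    (mk_Iic_le_of_lt_lamPlus hlam hη)
  refine ⟨fun δ => if δ ≤ η then Order.succ (e δ) else 0, fun δ => ?_, fun α hα β h => ?_⟩
  · dsimp only
    split_ifs
    exacts [(isSuccLimit_ord hlam).succ_lt (he δ), (isSuccLimit_ord hlam).bot_lt]
  · by_cases hβ : β ≤ η
    · simp only [if_pos hα, if_pos hβ, Order.succ_eq_succ_iff] at h
      exact hinj hα hβ h
    · simp [if_pos hα, if_neg hβ] at h

theorem exists_isRegressive_determining (hlam : ℵ₀ ≤ lam) {T : Type v} (D : Ordinal → T)
    (B : Ordinal → Set T) (hB : ∀ γ < lamPlus lam, #(B γ) ≤ lift lam)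
    (hD : ∀ δ ∈ Sstat lam, ∃ γ < δ, D δ ∈ B γ) :
    ∃ G : Ordinal → Ordinal, IsRegressive lam G ∧
      ∀ α ∈ Sstat lam, ∀ β ∈ Sstat lam, G α = G β → D α = D β := by
  choose! γ hγ hDγ using hD
  -- `G δ = λ * q + e q (D δ)` with `q = γ δ / λ` stays below `δ`, a multiple of `λ`, and `e q` is
  -- injective on all the boxes `B γ` with `γ / λ = q` at once.
  set C : Ordinal → Set T := fun q =>
    ⋃ s : Iio lam.ord, {t ∈ B (lam.ord * q + s) | lam.ord * q + s < lamPlus lam}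
  have hC : ∀ q, #(C q) ≤ lift lam := fun q => mk_iUnion_Iio_ord_le hlam _ fun s => by
    by_cases hs : lam.ord * q + s < lamPlus lam
    · exact (mk_le_mk_of_subset (sep_subset _ _)).trans (hB _ hs)
    · simp [hs]
  choose e he hinj using fun q => exists_lt_ord_injOn (aleph0_pos.trans_le hlam).ne' (hC q)
  have hmemC : ∀ δ ∈ Sstat lam, D δ ∈ C (γ δ / lam.ord) := fun δ hδ => by
    have hord : lam.ord ≠ 0 := (ord_pos.2 (aleph0_pos.trans_le hlam)).ne'
    refine mem_iUnion.2 ⟨⟨γ δ % lam.ord, Ordinal.mod_lt _ hord⟩, ?_⟩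
    rw [Ordinal.div_add_mod]
    exact ⟨hDγ δ hδ, (hγ δ hδ).trans hδ.1⟩
  refine ⟨fun δ => lam.ord * (γ δ / lam.ord) + e (γ δ / lam.ord) (D δ), fun δ hδ => ?_,
    fun α hα β hβ h => ?_⟩
  · exact ((add_lt_add_iff_left _).2 (he _ _)).trans_le
      (mul_div_add_le_of_mem_Sstat hδ (hγ δ hδ))
  · obtain ⟨hq, he'⟩ := mul_add_inj_of_lt (he _ _) (he _ _) h
    rw [← hq] at he'
    exact hinj _ (hmemC α hα) (hq ▸ hmemC β hβ) he'

theorem otp_inter_Iio_eq_typein {s : Set Ordinal} {ξ : Ordinal} (h : ξ ∈ s) :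
    otp (s ∩ Iio ξ) = Ordinal.typein (α := s) (· < ·) ⟨ξ, h⟩ := by
  rw [← Ordinal.type_Iio_lt]
  exact OrderIso.ordinalType_congr
    { toFun := fun x => ⟨⟨x.1, x.2.1⟩, x.2.2⟩
      invFun := fun x => ⟨x.1.1, x.1.2, x.2⟩
      left_inv := fun _ => rfl
      right_inv := fun _ => rfl
      map_rel_iff' := Iff.rfl }

theorem otp_inter_Iio_injOn {s : Set Ordinal} : InjOn (fun ξ => otp (s ∩ Iio ξ)) s :=
  fun ξ h ξ' h' he => by
    simp only [otp_inter_Iio_eq_typein h, otp_inter_Iio_eq_typein h'] at he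
    exact congrArg Subtype.val (Ordinal.typein_injective _ he)

theorem otp_lt_lift_ord {s : Set Ordinal} (h : #s < lift lam) : otp s < Ordinal.lift lam.ord := by
  rwa [lift_ord, lt_ord, otp, Ordinal.card_type]

section Trace

variable (u : Ordinal → Set Ordinal)

noncomputable def firstIndex (ξ : Ordinal) : Ordinal :=
  sInf {α | ξ ∈ u α}

variable {u}

theorem mem_firstIndex {α ξ : Ordinal} (h : ξ ∈ u α) : ξ ∈ u (firstIndex u ξ) :=
  csInf_mem (s := {α | ξ ∈ u α}) ⟨α, h⟩

theorem firstIndex_le {α ξ : Ordinal} (h : ξ ∈ u α) : firstIndex u ξ ≤ α :=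
  csInf_le' h

abbrev TraceEntry : Type 2 :=
  Ordinal.{0} × Ordinal.{1} × Ordinal.{1} × Ordinal.{0} × Ordinal.{0} × Ordinal.{0}

variable (u) (f r m : Ordinal → Ordinal → Ordinal)

/-- `r ξ` is the regressive function and `m ξ` the marker attached to `ξ`. The first two
components determine `ξ`, and for the `ξ` listed in `trace δ` they are small even when `ξ ≥ δ`. -/
noncomputable def traceEntry (δ ξ : Ordinal) : TraceEntry :=
  (firstIndex u ξ, otp (u (firstIndex u ξ) ∩ Iio ξ), otp (u δ ∩ Iio ξ), f δ ξ, r ξ δ, m ξ δ)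

noncomputable def trace (δ : Ordinal) : Ordinal.{1} × Set TraceEntry :=
  (otp (u δ), traceEntry u f r m δ '' {ξ ∈ u δ | firstIndex u ξ < δ})

def entryBox (lam : Cardinal.{0}) (γ : Ordinal) : Set TraceEntry :=
  Iio γ ×ˢ Iio (Ordinal.lift lam.ord) ×ˢ Iio (Ordinal.lift lam.ord) ×ˢ Iio lam.ord ×ˢ Iio γ ×ˢ
    Iio lam.ord

def traceBox (lam : Cardinal.{0}) (γ : Ordinal) : Set (Ordinal.{1} × Set TraceEntry) :=
  Iio (Ordinal.lift lam.ord) ×ˢ {S | S ⊆ entryBox lam γ ∧ #S < lift lam}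

theorem mk_traceBox_le (hlam : ℵ₀ ≤ lam) (hpow : lam ^< lam = lam) {γ : Ordinal}
    (hγ : γ < lamPlus lam) : #(traceBox lam γ) ≤ lift lam := by
  have hord : #(Iio lam.ord) ≤ lift lam := mk_Iio_ord.le
  have hlift : #(Iio (Ordinal.lift.{1} lam.ord)) ≤ lift lam := by simp [mk_Iio_ordinal]
  have hγ' := mk_Iio_le_of_lt_lamPlus hγ
  refine mk_set_prod_le hlam hlift (mk_bounded_subset_lt_le hlam hpow ?_)
  exact mk_set_prod_le hlam hγ' (mk_set_prod_le hlam hlift (mk_set_prod_le hlam hlift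
    (mk_set_prod_le hlam hord (mk_set_prod_le hlam hγ' hord))))

variable {u f r m}

theorem exists_trace_mem_traceBox (hu : ∀ α < lamPlus lam, #(u α) < lift lam)
    (hf : ∀ α < lamPlus lam, ∀ ξ ∈ u α, f α ξ < lam.ord)
    (hr : ∀ α ∈ Sstat lam, ∀ ξ ∈ u α, r ξ α < α)
    (hm : ∀ α < lamPlus lam, ∀ ξ ∈ u α, m ξ α < lam.ord) {δ : Ordinal} (hδ : δ ∈ Sstat lam) :
    ∃ γ < δ, trace u f r m δ ∈ traceBox lam γ := by
  set V := {ξ ∈ u δ | firstIndex u ξ < δ}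
  have hV : #V < lift lam := (mk_le_mk_of_subset (sep_subset _ _)).trans_lt (hu δ hδ.1)
  have hbelow : ∀ ξ : V, firstIndex u ξ ⊔ r ξ δ < δ := fun ξ => max_lt ξ.2.2 (hr δ hδ ξ ξ.2.1)
  have hγδ : ⨆ ξ : V, (firstIndex u ξ ⊔ r ξ δ) + 1 < δ := by
    refine Ordinal.lift_iSup_add_one_lt_of_lt_cof ?_ hbelow
    rw [← Ordinal.lift_cof, hδ.2]
    simpa using hV
  have hbdd : BddAbove (range fun ξ : V => (firstIndex u ξ ⊔ r ξ δ) + 1) :=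
    ⟨δ, by rintro _ ⟨ξ, rfl⟩; exact Order.add_one_le_of_lt (hbelow ξ)⟩
  have hlt : ∀ ξ : V, firstIndex u ξ ⊔ r ξ δ < ⨆ ξ : V, (firstIndex u ξ ⊔ r ξ δ) + 1 :=
    fun ξ => (lt_add_one _).trans_le (le_ciSup hbdd ξ)
  refine ⟨_, hγδ, otp_lt_lift_ord (hu δ hδ.1), ?_, ?_⟩
  · rintro _ ⟨ξ, hξ, rfl⟩
    have hpos : ∀ α < lamPlus lam, otp (u α ∩ Iio ξ) < Ordinal.lift lam.ord := fun α hα =>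
      otp_lt_lift_ord ((mk_le_mk_of_subset inter_subset_left).trans_lt (hu α hα))
    exact ⟨(le_max_left _ _).trans_lt (hlt ⟨ξ, hξ⟩), hpos _ (hξ.2.trans hδ.1), hpos δ hδ.1,
      hf δ hδ.1 ξ hξ.1, (le_max_right _ _).trans_lt (hlt ⟨ξ, hξ⟩), hm δ hδ.1 ξ hξ.1⟩
  · have hV' : lift.{2} #V < lift.{2} (lift.{1} lam) := lift_lt.2 hV
    have := (mk_image_le_lift (f := traceEntry u f r m δ) (s := V)).trans_lt hV'
    rwa [lift_id'.{1, 2}, lift_lift] at this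

theorem traceEntry_eq_of_trace_eq {α β ξ : Ordinal} (h : trace u f r m α = trace u f r m β)
    (hαβ : α < β) (hα : ξ ∈ u α) (hβ : ξ ∈ u β) :
    traceEntry u f r m α ξ = traceEntry u f r m β ξ := by
  have hvis : traceEntry u f r m β ξ ∈ (trace u f r m α).2 := by
    rw [h]
    exact ⟨ξ, ⟨hβ, (firstIndex_le hα).trans_lt hαβ⟩, rfl⟩
  obtain ⟨ξ', ⟨hξ', -⟩, hentry⟩ := hvis
  have hfirst : firstIndex u ξ' = firstIndex u ξ := congrArg Prod.fst hentry
  have hpos := congrArg (·.2.1) hentry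
  simp only [traceEntry, hfirst] at hpos
  obtain rfl : ξ' = ξ :=
    otp_inter_Iio_injOn (hfirst ▸ mem_firstIndex hξ') (mem_firstIndex hα) hpos
  exact hentry

end Trace

theorem exists_isRegressive_deltaSystemPair (hlam : ℵ₀ ≤ lam) (hpow : lam ^< lam = lam)
    {u : Ordinal → Set Ordinal.{0}} (hu : ∀ α < lamPlus lam, #(u α) < lift lam)
    {f : Ordinal → Ordinal → Ordinal} (hf : ∀ α < lamPlus lam, ∀ ξ ∈ u α, f α ξ < lam.ord)
    {η : Ordinal → Ordinal} {r : Ordinal → Ordinal → Ordinal}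
    (hηr : ∀ α < lamPlus lam, ∀ ξ ∈ u α, η ξ < lamPlus lam ∧ IsRegressive lam (r ξ)) :
    ∃ G : Ordinal → Ordinal, IsRegressive lam G ∧ ∀ α ∈ Sstat lam, ∀ β ∈ Sstat lam, α < β →
      G α = G β → DeltaSystemPair (u α) (u β) (f α) (f β) ∧
        ∀ ξ ∈ u α ∩ u β, η ξ < α ∧ r ξ α = r ξ β := by
  choose! m hm hsep using fun ξ (hξ : η ξ < lamPlus lam) => exists_lt_ord_separating_Iic hlam hξ
  obtain ⟨G, hG, hGtrace⟩ := exists_isRegressive_determining hlam (trace u f r m) (traceBox lam)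
    (fun γ hγ => mk_traceBox_le hlam hpow hγ)
    (fun δ hδ => exists_trace_mem_traceBox hu hf
      (fun α hα ξ hξ => (hηr α hα.1 ξ hξ).2 α hα)
      (fun α hα ξ hξ => hm ξ (hηr α hα ξ hξ).1 α) hδ)
  refine ⟨G, hG, fun α hα β hβ hαβ hGαβ => ?_⟩
  have htrace := hGtrace α hα β hβ hGαβ
  have hentry : ∀ ξ ∈ u α ∩ u β, traceEntry u f r m α ξ = traceEntry u f r m β ξ :=
    fun ξ hξ => traceEntry_eq_of_trace_eq htrace hαβ hξ.1 hξ.2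
  refine ⟨⟨congrArg Prod.fst htrace, fun ξ hξ => ⟨congrArg (·.2.2.1) (hentry ξ hξ),
    congrArg (·.2.2.2.1) (hentry ξ hξ)⟩⟩, fun ξ hξ => ⟨?_, congrArg (·.2.2.2.2.1) (hentry ξ hξ)⟩⟩
  by_contra! hle
  exact hαβ.ne (hsep ξ (hηr α hα.1 ξ hξ.1).1 α hle β (congrArg (·.2.2.2.2.2) (hentry ξ hξ)))

-- `IsClub` demands closure at successor ordinals too, which makes every club a final segment.
theorem IsClub.mem_of_le {E : Set Ordinal} (hE : IsClub lam E) {η x : Ordinal} (hη : η ∈ E)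
    (hx : η ≤ x) (hxlam : x < lamPlus lam) : x ∈ E := by
  induction x using WellFoundedLT.induction with
  | _ x ih =>
    rcases hx.eq_or_lt with rfl | hηx
    · exact hη
    refine hE.2.2 x hxlam (pos_of_gt hηx).ne' fun b hb => ?_
    rcases le_or_gt b η with hbη | hηb
    · exact ⟨η, hη, hbη, hηx⟩
    · exact ⟨b, ih b hb hηb.le (hb.trans hxlam), le_rfl, hb⟩

theorem exists_tail_isRegressive_of_mem_Dlam {X : Set (Ordinal × Ordinal)} (hX : X ∈ Dlam lam) :
    ∃ η r, η < lamPlus lam ∧ IsRegressive lam r ∧ ∀ α ∈ Sstat lam, ∀ β ∈ Sstat lam,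
      η ≤ α → α < β → r α = r β → (α, β) ∈ X := by
  obtain ⟨-, E, r, hE, hr, hgen⟩ := hX
  obtain ⟨η, hη, -⟩ := hE.2.1 0 lamPlus_pos
  refine ⟨η, r, hE.1 η hη, hr, fun α hα β hβ hηα hαβ hrαβ =>
    hgen ⟨hαβ, hβ.1, ⟨hα, ?_⟩, ⟨hβ, ?_⟩, hrαβ⟩⟩
  · exact hE.mem_of_le hη hηα hα.1
  · exact hE.mem_of_le hη (hηα.trans hαβ.le) hβ.1

theorem mem_Dlam_of_isRegressive {X : Set (Ordinal × Ordinal)}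
    (hX : X ⊆ Iio (lamPlus lam) ×ˢ Iio (lamPlus lam)) {G : Ordinal → Ordinal}
    (hG : IsRegressive lam G)
    (hGX : ∀ α ∈ Sstat lam, ∀ β ∈ Sstat lam, α < β → G α = G β → (α, β) ∈ X) : X ∈ Dlam lam :=
  ⟨hX, Iio (lamPlus lam), G, ⟨fun _ h => h, fun a ha => ⟨a, ha, le_rfl⟩, fun _ h _ _ => h⟩, hG,
    fun p ⟨hlt, _, ⟨hα, _⟩, ⟨hβ, _⟩, hGp⟩ => hGX p.1 hα p.2 hβ hlt hGp⟩

end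

/-- Given u_α ∈ [Ord]^{<λ}, f_α : u_α → λ (for α < λ⁺) and g into D_λ^0, the set of pairs
(α,β) with α < β < λ⁺ such that (f_α,f_β) is a Δ-system pair and (α,β) ∈ g(ξ) for every
ξ ∈ u_α ∩ u_β, belongs to D_λ^0. -/
theorem stmt2 (lam : Cardinal) (hreg : lam.IsRegular) (hpow : lam ^< lam = lam)
    (u : Ordinal → Set Ordinal)
    (hu : ∀ α < lamPlus lam, #(u α) < Cardinal.lift.{1,0} lam)
    (f : Ordinal → Ordinal → Ordinal)
    (hf : ∀ α < lamPlus lam, ∀ ξ ∈ u α, f α ξ < lam.ord)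
    (g : Ordinal → Set (Ordinal × Ordinal))
    (hg : ∀ ξ ∈ ⋃ α ∈ Set.Iio (lamPlus lam), u α, g ξ ∈ Dlam lam) :
    {p : Ordinal × Ordinal | p.1 < p.2 ∧ p.2 < lamPlus lam ∧
      DeltaSystemPair (u p.1) (u p.2) (f p.1) (f p.2) ∧
      ∀ ξ ∈ u p.1 ∩ u p.2, p ∈ g ξ} ∈ Dlam lam := by
  choose! η r hη hr hηr using fun ξ hξ => exists_tail_isRegressive_of_mem_Dlam (hg ξ hξ)
  have hU : ∀ α < lamPlus lam, ∀ ξ ∈ u α, ξ ∈ ⋃ α ∈ Set.Iio (lamPlus lam), u α :=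
    fun α hα ξ hξ => mem_biUnion hα hξ
  obtain ⟨G, hG, hGΔ⟩ := exists_isRegressive_deltaSystemPair hreg.aleph0_le hpow hu hf
    (fun α hα ξ hξ => ⟨hη ξ (hU α hα ξ hξ), hr ξ (hU α hα ξ hξ)⟩)
  refine mem_Dlam_of_isRegressive (fun p hp => ⟨hp.1.trans hp.2.1, hp.2.1⟩) hG
    fun α hα β hβ hαβ hGαβ => ?_
  obtain ⟨hΔ, hshared⟩ := hGΔ α hα β hβ hαβ hGαβ
  refine ⟨hαβ, hβ.1, hΔ, fun ξ hξ => ?_⟩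
  obtain ⟨hηα, hrαβ⟩ := hshared ξ hξ
  exact hηr ξ (hU α hα.1 ξ hξ.1) α hα β hβ hηα.le hαβ hrαβ

end Stmt2
end
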